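/- arXiv:2404.19243 — 7 statements merged into one kernel-verified Lean document; each statement's English description precedes it below -/
import Mathlib

section
/- For an OPP o of length m, the number of permutations f of {1,...,m} that are fusion patterns of o (i.e., satisfying suffixorder(o) = prefixorder(f)) is exactly m. -/
/-- Rank of entry `j` among the entries of `q` (1-indexed rank). -/
def rankMap {α : Type*} [LinearOrder α] {m : ℕ} (q : Fin m → α) : Fin m → ℕ :=
  fun j => (Finset.univ.filter fun i => q i ≤ q j).card

/-- `x` is an order-preserving pattern (a permutation of `{1,...,m}` written as a sequence). -/
def IsOPP {m : ℕ} (x : Fin m → ℕ) : Prop :=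
  Function.Injective x ∧ ∀ j, 1 ≤ x j ∧ x j ≤ m

/-- The length-`ℓ` window of the (1-indexed) time series `k` ending at index `c`. -/
def window (k : ℕ → ℝ) (c ℓ : ℕ) : Fin ℓ → ℝ :=
  fun j => k (c - ℓ + 1 + (j : ℕ))

/-- `c` is an occurrence (end index) of pattern `p` in the time series `k` of length `n`. -/
def isOcc (k : ℕ → ℝ) (n : ℕ) {ℓ : ℕ} (p : Fin ℓ → ℕ) (c : ℕ) : Prop :=
  ℓ ≤ c ∧ c ≤ n ∧ rankMap (window k c ℓ) = p

/-- Relative order of the first `m` entries of `x`. -/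
def prefixorder {α : Type*} [LinearOrder α] {m : ℕ} (x : Fin (m+1) → α) : Fin m → ℕ :=
  rankMap (fun j : Fin m => x j.castSucc)

/-- Relative order of the last `m` entries of `x`. -/
def suffixorder {α : Type*} [LinearOrder α] {m : ℕ} (x : Fin (m+1) → α) : Fin m → ℕ :=
  rankMap (fun j : Fin m => x j.succ)

open Classical in
/-- The set of occurrences of `p` in `k`. -/
noncomputable def occSet (k : ℕ → ℝ) (n : ℕ) {ℓ : ℕ} (p : Fin ℓ → ℕ) : Finset ℕ :=
  (Finset.Icc 1 n).filter fun c => isOcc k n p c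

/-- The support of `p` in `k`. -/
noncomputable def supp (k : ℕ → ℝ) (n : ℕ) {ℓ : ℕ} (p : Fin ℓ → ℕ) : ℕ :=
  (occSet k n p).card

/-!
Only the relative order of `f₁, …, f_m` is prescribed, by the rank pattern of `o₂, …, o_{m+1}`,
so a fusion pattern is determined by its last entry `v`: the first `m` entries must then be the
elements of `{1, …, m+1} \ {v}` arranged in the prescribed order. Each of the `m + 1` choices
of `v` occurs, giving exactly `m + 1` fusion patterns.
-/

open Equiv Function Finset

section rankMap

variable {α β : Type*} [LinearOrder α] [LinearOrder β] {m : ℕ}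

lemma rankMap_strictMono_comp {f : α → β} (hf : StrictMono f) (q : Fin m → α) :
    rankMap (f ∘ q) = rankMap q := by
  funext j
  simp only [rankMap, comp_apply, hf.le_iff_le]

lemma rankMap_perm_apply (τ : Perm (Fin m)) (j : Fin m) : rankMap τ j = τ j + 1 := by
  rw [rankMap, ← Fin.card_Iic]
  exact card_equiv τ (by simp)

lemma rankMap_perm_injective : Injective fun τ : Perm (Fin m) => rankMap τ := by
  intro τ τ' h
  ext j
  simpa [rankMap_perm_apply] using congrFun h j

lemma exists_perm_rankMap_eq {q : Fin m → α} (hq : Injective q) :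
    ∃ τ : Perm (Fin m), rankMap τ = rankMap q := by
  have hsorted : StrictMono (q ∘ Tuple.sort q) :=
    (Tuple.monotone_sort q).strictMono_of_injective (hq.comp (Tuple.sort q).injective)
  refine ⟨(Tuple.sort q)⁻¹, ?_⟩
  rw [← rankMap_strictMono_comp hsorted]
  congr 1
  ext j
  simp

end rankMap

section fusion

variable {m : ℕ}

lemma exists_perm_eq_succAbove_comp {g : Fin m → Fin (m + 1)} (hg : Injective g) {v : Fin (m + 1)}
    (hv : ∀ j, g j ≠ v) : ∃ τ : Perm (Fin m), g = v.succAbove ∘ τ := by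
  choose τ hτ using fun j => Fin.exists_succAbove_eq (hv j)
  have hτinj : Injective τ := fun i j h => hg (by rw [← hτ i, ← hτ j, h])
  exact ⟨.ofBijective τ (Finite.injective_iff_bijective.mp hτinj), funext fun j => (hτ j).symm⟩

lemma rankMap_comp_castSucc_eq_iff (σ : Perm (Fin (m + 1))) (τ : Perm (Fin m)) :
    rankMap (σ ∘ Fin.castSucc) = rankMap τ ↔
      σ ∘ Fin.castSucc = (σ (Fin.last m)).succAbove ∘ τ := by
  refine ⟨fun h => ?_, fun h => by rw [h, rankMap_strictMono_comp (Fin.strictMono_succAbove _)]⟩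
  obtain ⟨τ', hτ'⟩ := exists_perm_eq_succAbove_comp (σ.injective.comp (Fin.castSucc_injective m))
    fun j => σ.injective.ne (Fin.castSucc_ne_last j)
  rw [hτ', rankMap_strictMono_comp (Fin.strictMono_succAbove _)] at h
  rw [hτ', rankMap_perm_injective h]

open Classical in
lemma card_filter_comp_castSucc_eq_succAbove_comp (τ : Perm (Fin m)) :
    #{σ : Perm (Fin (m + 1)) | σ ∘ Fin.castSucc = (σ (Fin.last m)).succAbove ∘ τ} = m + 1 := by
  refine (card_bij (fun σ _ => σ (Fin.last m)) (fun _ _ => mem_univ _) ?_ ?_).trans (card_fin _)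
  · intro σ hσ σ' hσ' hlast
    simp only [mem_filter, mem_univ, true_and] at hσ hσ'
    ext i
    induction i using Fin.lastCases with
    | last => rw [hlast]
    | cast j => rw [← comp_apply (f := σ), hσ, hlast, ← hσ', comp_apply]
  · intro v _
    have hinj : Injective (Fin.snoc (v.succAbove ∘ τ) v : Fin (m + 1) → Fin (m + 1)) :=
      Fin.snoc_injective_of_injective (Fin.succAbove_right_injective.comp τ.injective) (by simp)
    refine ⟨.ofBijective _ (Finite.injective_iff_bijective.mp hinj), ?_, by simp⟩
    simp only [mem_filter, mem_univ, true_and]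
    ext j
    simp

end fusion

open Classical in
theorem stmt6 {m : ℕ} (o : Fin (m+1) → ℕ) (ho : IsOPP o) :
    (Finset.univ.filter fun σ : Equiv.Perm (Fin (m+1)) =>
        suffixorder o = prefixorder (fun j => (σ j : ℕ) + 1)).card = m + 1 := by
  obtain ⟨τ, hτ⟩ := exists_perm_rankMap_eq (q := fun j : Fin m => o j.succ)
    fun i j h => Fin.succ_injective _ (ho.1 h)
  have hsucc : StrictMono fun x : Fin (m + 1) => (x : ℕ) + 1 :=
    fun x y h => Nat.succ_lt_succ h
  have hfusion : ∀ σ : Perm (Fin (m + 1)), suffixorder o = prefixorder (fun j => (σ j : ℕ) + 1) ↔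
      σ ∘ Fin.castSucc = (σ (Fin.last m)).succAbove ∘ τ := fun σ => by
    have hprefix : prefixorder (fun j => (σ j : ℕ) + 1) = rankMap (σ ∘ Fin.castSucc) :=
      rankMap_strictMono_comp hsucc (σ ∘ Fin.castSucc)
    rw [hprefix, ← rankMap_comp_castSucc_eq_iff, hτ, suffixorder, eq_comm]
  simp_rw [hfusion]
  exact card_filter_comp_castSucc_eq_succAbove_comp τ
end

section
/- If i is an occurrence of an OPP o of length m in keypoint time series k and i+1 ≤ n, then i+1 is an occurrence of exactly one fusion pattern of o, namely the unique permutation f of {1,...,m} with prefixorder(f) = suffixorder(o) and f_m equal to the rank of k_{i+1} in (k_{i-m+2},...,k_{i+1}). -/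
lemma rank_le_iff {α : Type*} [LinearOrder α] {m : ℕ} (q : Fin m → α) (a b : Fin m) :
    rankMap q a ≤ rankMap q b ↔ q a ≤ q b := by
  constructor
  · intro hc
    by_contra hab
    push_neg at hab
    have hss : (Finset.univ.filter fun i => q i ≤ q b) ⊂
        (Finset.univ.filter fun i => q i ≤ q a) := by
      constructor
      · intro x hx
        simp only [Finset.mem_filter, Finset.mem_univ, true_and] at hx ⊢
        exact hx.trans hab.le
      · intro hsub
        have := hsub (Finset.mem_filter.mpr ⟨Finset.mem_univ a, le_refl _⟩)
        simp only [Finset.mem_filter, Finset.mem_univ, true_and] at this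
        exact absurd this (not_le.mpr hab)
    exact absurd hc (not_le.mpr (Finset.card_lt_card hss))
  · intro hab
    apply Finset.card_le_card
    intro x hx
    simp only [Finset.mem_filter, Finset.mem_univ, true_and] at hx ⊢
    exact hx.trans hab

lemma rankMap_congr {α β : Type*} [LinearOrder α] [LinearOrder β] {m : ℕ}
    (p : Fin m → α) (q : Fin m → β) (h : ∀ a b, p a ≤ p b ↔ q a ≤ q b) :
    rankMap p = rankMap q := by
  funext j
  unfold rankMap
  congr 1
  apply Finset.filter_congr
  intro x _
  simpa using h x j

lemma isOPP_rankMap {m : ℕ} (q : Fin (m+1) → ℝ) (hq : Function.Injective q) :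
    IsOPP (rankMap q) := by
  constructor
  · intro a b hab
    exact hq (le_antisymm ((rank_le_iff q a b).1 hab.le) ((rank_le_iff q b a).1 hab.ge))
  · intro j
    refine ⟨Finset.card_pos.mpr ⟨j, by simp⟩, ?_⟩
    calc (Finset.univ.filter fun i => q i ≤ q j).card
        ≤ (Finset.univ : Finset (Fin (m+1))).card := Finset.card_filter_le _ _
      _ = m + 1 := by simp

theorem stmt8 {m : ℕ} (k : ℕ → ℝ) (n : ℕ) (hk : Set.InjOn k (Set.Icc 1 n))
    (o : Fin (m+1) → ℕ) (ho : IsOPP o) (i : ℕ) (h : isOcc k n o i) (hi : i + 1 ≤ n) :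
    (∃! f : Fin (m+1) → ℕ, IsOPP f ∧ prefixorder f = suffixorder o ∧ isOcc k n f (i+1)) ∧
    (∀ f : Fin (m+1) → ℕ, IsOPP f → prefixorder f = suffixorder o → isOcc k n f (i+1) →
      f (Fin.last m) = rankMap (window k (i+1) (m+1)) (Fin.last m)) := by
  obtain ⟨hmi, hin, ho_eq⟩ := h
  have hwinj : Function.Injective (window k (i+1) (m+1)) := by
    intro a b hab
    have ha := a.isLt
    have hb := b.isLt
    unfold window at hab
    have h1 : (i+1) - (m+1) + 1 + (a : ℕ) ∈ Set.Icc 1 n := ⟨by omega, by omega⟩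
    have h2 : (i+1) - (m+1) + 1 + (b : ℕ) ∈ Set.Icc 1 n := ⟨by omega, by omega⟩
    have := hk h1 h2 hab
    exact Fin.ext (by omega)
  have hfopp : IsOPP (rankMap (window k (i+1) (m+1))) := isOPP_rankMap _ hwinj
  have hocc : isOcc k n (rankMap (window k (i+1) (m+1))) (i+1) := ⟨by omega, hi, rfl⟩
  have hwin : ∀ j : Fin m, window k (i+1) (m+1) j.castSucc = window k i (m+1) j.succ := by
    intro j
    unfold window
    congr 1
    have := j.isLt
    simp only [Fin.coe_castSucc, Fin.val_succ]
    omega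
  have hpre : prefixorder (rankMap (window k (i+1) (m+1))) = suffixorder o := by
    rw [← ho_eq]
    unfold prefixorder suffixorder
    apply rankMap_congr
    intro a b
    rw [rank_le_iff, rank_le_iff, hwin a, hwin b]
  refine ⟨⟨rankMap (window k (i+1) (m+1)), ⟨hfopp, hpre, hocc⟩,
      fun g hg => hg.2.2.2.2.symm⟩, fun g _ _ hg => ?_⟩
  rw [← hg.2.2]
end

section
/- Correctness of the VOP verification: let o be an OPP of length m with suffix pattern s = suffixorder(o), let c be an occurrence of s in k, and define the lower position l_p as the unchanged position j+1 (where s_j = o_{j+1}) maximizing o_{l_p}, and the upper position u_p as the changed position (where s_j ≠ o_{j+1}) minimizing o_{u_p}. Then c is an occurrence of o if and only if k_{c-m+1} > k_{c-m+l_p} (when l_p exists) and k_{c-m+1} < k_{c-m+u_p} (when u_p exists). -/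
section auxl
variable {α : Type*} [LinearOrder α] {m : ℕ}

lemma rankMap_mono {q : Fin m → α} {i j : Fin m} (h : q i ≤ q j) :
    rankMap q i ≤ rankMap q j := by
  apply Finset.card_le_card
  intro t ht
  simp only [Finset.mem_filter, Finset.mem_univ, true_and] at *
  exact le_trans ht h

lemma rankMap_strict {q : Fin m → α} {i j : Fin m} (h : q i < q j) :
    rankMap q i < rankMap q j := by
  apply Finset.card_lt_card
  rw [Finset.ssubset_iff_of_subset]
  · exact ⟨j, by simp, by simp [not_le.mpr h]⟩
  · intro t ht
    simp only [Finset.mem_filter, Finset.mem_univ, true_and] at *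
    exact le_trans ht h.le

lemma rankMap_le_iff {q : Fin m → α} (i j : Fin m) :
    q i ≤ q j ↔ rankMap q i ≤ rankMap q j := by
  constructor
  · exact rankMap_mono
  · intro h
    by_contra hcon
    push_neg at hcon
    exact absurd (rankMap_strict hcon) (by omega)

lemma rankMap_of_perm {o : Fin m → ℕ} (h1 : Function.Injective o)
    (h2 : ∀ j, 1 ≤ o j ∧ o j ≤ m) : rankMap o = o := by
  have himg : Finset.univ.image o = Finset.Icc 1 m := by
    apply Finset.eq_of_subset_of_card_le
    · intro v hv
      simp only [Finset.mem_image, Finset.mem_univ, true_and] at hv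
      obtain ⟨i, rfl⟩ := hv
      simp [Finset.mem_Icc, (h2 i).1, (h2 i).2]
    · rw [Finset.card_image_of_injective _ h1]
      simp [Nat.card_Icc]
  funext j
  have key : (Finset.univ.filter fun i => o i ≤ o j).image o
      = (Finset.univ.image o).filter (· ≤ o j) := by rw [Finset.filter_image]
  have : rankMap o j = ((Finset.univ.image o).filter (· ≤ o j)).card := by
    rw [← key, Finset.card_image_of_injective _ h1]; rfl
  rw [rankMap] at *
  rw [this, himg]
  have : (Finset.Icc 1 m).filter (· ≤ o j) = Finset.Icc 1 (o j) := by
    ext v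
    simp only [Finset.mem_filter, Finset.mem_Icc]
    have := (h2 j).2
    omega
  rw [this, Nat.card_Icc]
  have := (h2 j).1
  omega

lemma filter_card_succ (p : Fin (m+1) → Prop) [DecidablePred p] :
    (Finset.univ.filter p).card
      = (if p 0 then 1 else 0) + (Finset.univ.filter fun i : Fin m => p i.succ).card := by
  rw [Finset.card_filter, Finset.card_filter, Fin.sum_univ_succ]

end auxl

theorem stmt9 {m : ℕ} (k : ℕ → ℝ) (n : ℕ) (hk : Set.InjOn k (Set.Icc 1 n))
    (o : Fin (m+1) → ℕ) (ho : IsOPP o) (c : ℕ) (hcm : m + 1 ≤ c) (hcn : c ≤ n)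
    (hc : isOcc k n (suffixorder o) c) :
    isOcc k n o c ↔
      ((∀ lp : Fin m,
          (suffixorder o lp = o lp.succ ∧
            ∀ j : Fin m, suffixorder o j = o j.succ → o j.succ ≤ o lp.succ) →
          window k c (m+1) lp.succ < window k c (m+1) 0) ∧
       (∀ up : Fin m,
          (suffixorder o up ≠ o up.succ ∧
            ∀ j : Fin m, suffixorder o j ≠ o j.succ → o up.succ ≤ o j.succ) →
          window k c (m+1) 0 < window k c (m+1) up.succ)) := by
  obtain ⟨hoinj, hobd⟩ := ho
  have hro : rankMap o = o := rankMap_of_perm hoinj hobd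
  set w : Fin (m+1) → ℝ := window k c (m+1) with hwdef
  have hwin : window k c m = fun j : Fin m => w j.succ := by
    funext j
    show k (c - m + 1 + (j : ℕ)) = k (c - (m+1) + 1 + ((j : ℕ) + 1))
    congr 1
    omega
  have hq : rankMap (fun j : Fin m => w j.succ) = rankMap (fun j : Fin m => o j.succ) := by
    rw [← hwin]; exact hc.2.2
  have hsfx : ∀ i j : Fin m, w i.succ ≤ w j.succ ↔ o i.succ ≤ o j.succ := by
    intro i j
    rw [rankMap_le_iff (q := fun t : Fin m => w t.succ) i j, hq,
      ← rankMap_le_iff (q := fun t : Fin m => o t.succ) i j]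
  have hne : ∀ i : Fin m, o 0 ≠ o i.succ := fun i hh => (Fin.succ_ne_zero i) (hoinj hh).symm
  have hchar : ∀ j : Fin m, (suffixorder o j = o j.succ ↔ o j.succ < o 0) := by
    intro j
    have hsplit : o j.succ = (if o 0 ≤ o j.succ then 1 else 0) + suffixorder o j := by
      conv_lhs => rw [← hro]
      exact filter_card_succ (fun i => o i ≤ o j.succ)
    have hne' := hne j
    by_cases h0 : o 0 ≤ o j.succ
    · rw [if_pos h0] at hsplit
      omega
    · rw [if_neg h0] at hsplit
      omega
  constructor
  · intro hocc
    have hrw : rankMap w = o := hocc.2.2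
    have hiso : ∀ i j : Fin (m+1), o i ≤ o j ↔ w i ≤ w j := by
      intro i j
      conv_lhs => rw [← hro]
      rw [← hrw, ← rankMap_le_iff, ← rankMap_le_iff]
    have hlt : ∀ i j : Fin (m+1), o i < o j → w i < w j := by
      intro i j hij
      rcases lt_or_ge (w i) (w j) with hle | hle
      · exact hle
      · have := (hiso j i).mpr hle
        omega
    constructor
    · rintro lp ⟨h1, -⟩
      exact hlt _ _ ((hchar lp).mp h1)
    · rintro up ⟨h1, -⟩
      refine hlt _ _ ?_
      rw [Ne, hchar up] at h1
      have := hne up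
      omega
  · intro h
    have hkey : ∀ i : Fin m, o 0 < o i.succ → w 0 < w i.succ := by
      intro i hi
      obtain ⟨up, hupS, hupmin⟩ := Finset.exists_min_image
        (Finset.univ.filter fun j : Fin m => o 0 < o j.succ) (fun j => o j.succ)
        ⟨i, by simp [hi]⟩
      simp only [Finset.mem_filter, Finset.mem_univ, true_and] at hupS hupmin
      have h2 := h.2 up ⟨by rw [Ne, hchar up]; omega,
        fun j hj => hupmin j (by have := hne j; rw [Ne, hchar j] at hj; omega)⟩
      calc w 0 < w up.succ := h2
        _ ≤ w i.succ := (hsfx up i).mpr (hupmin i hi)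
    have hkey2 : ∀ i : Fin m, o i.succ < o 0 → w i.succ < w 0 := by
      intro i hi
      obtain ⟨lp, hlpS, hlpmax⟩ := Finset.exists_max_image
        (Finset.univ.filter fun j : Fin m => o j.succ < o 0) (fun j => o j.succ)
        ⟨i, by simp [hi]⟩
      simp only [Finset.mem_filter, Finset.mem_univ, true_and] at hlpS hlpmax
      have h1 := h.1 lp ⟨(hchar lp).mpr hlpS, fun j hj => hlpmax j ((hchar j).mp hj)⟩
      calc w i.succ ≤ w lp.succ := (hsfx i lp).mpr (hlpmax i hi)
        _ < w 0 := h1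
    have hiso : ∀ t j : Fin (m+1), w t ≤ w j ↔ o t ≤ o j := by
      intro t j
      rcases Fin.eq_zero_or_eq_succ t with rfl | ⟨i, rfl⟩ <;>
        rcases Fin.eq_zero_or_eq_succ j with rfl | ⟨i', rfl⟩
      · simp
      · constructor
        · intro hle
          by_contra hc2
          push_neg at hc2
          have := hkey2 i' (by have := hne i'; omega)
          linarith
        · intro hle
          have hne' := hne i'
          exact (hkey i' (by omega)).le
      · constructor
        · intro hle
          by_contra hc2
          push_neg at hc2
          have := hkey i hc2
          linarith
        · intro hle
          have hne' := hne i
          exact (hkey2 i (by omega)).le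
      · exact hsfx i i'
    have hfin : rankMap w = o := by
      funext j
      have hflt : (Finset.univ.filter fun i => w i ≤ w j)
          = (Finset.univ.filter fun i => o i ≤ o j) := by
        apply Finset.filter_congr
        intro t _
        simp [hiso t j]
      show (Finset.univ.filter fun i => w i ≤ w j).card = o j
      rw [hflt]
      conv_rhs => rw [← hro]
      rfl
    exact ⟨hcm, hcn, hfin⟩
end

section
/- Case 1 of pattern fusion: let o and f be permutations of {1,...,m} with suffixorder(o) = prefixorder(f) and o_1 = f_m. Then there are exactly two permutations of {1,...,m+1} whose prefix OPP is o and whose suffix OPP is f: the pattern u with u_1 = o_1 and u_{m+1} = o_1 + 1, and the pattern v with v_1 = o_1 + 1 and v_{m+1} = o_1, where in both cases the middle entries are f_i if f_i < o_1 and f_i + 1 if f_i > o_1. -/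
open Function

lemma rankMap_eq_self_of_isOPP {m : ℕ} {x : Fin m → ℕ} (hx : IsOPP x) : rankMap x = x := by
  obtain ⟨hinj, hbd⟩ := hx
  funext j
  have himage : Finset.univ.image x = Finset.Icc 1 m := by
    refine Finset.eq_of_subset_of_card_le (fun v hv => ?_) ?_
    · obtain ⟨i, -, rfl⟩ := Finset.mem_image.mp hv
      exact Finset.mem_Icc.mpr (hbd i)
    · simp [Finset.card_image_of_injective _ hinj]
  have hbelow : (Finset.univ.filter fun i => x i ≤ x j).image x = Finset.Icc 1 (x j) := by
    ext v
    simp only [Finset.mem_image, Finset.mem_filter, Finset.mem_univ, true_and, Finset.mem_Icc]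
    constructor
    · rintro ⟨i, hi, rfl⟩
      exact ⟨(hbd i).1, hi⟩
    · intro hv
      have : v ∈ Finset.univ.image x := himage ▸ Finset.mem_Icc.mpr ⟨hv.1, hv.2.trans (hbd j).2⟩
      obtain ⟨i, -, rfl⟩ := Finset.mem_image.mp this
      exact ⟨i, hv.2, rfl⟩
  rw [rankMap, ← Finset.card_image_of_injective _ hinj, hbelow, Nat.card_Icc]
  omega

lemma rankMap_castSucc {α : Type*} [LinearOrder α] {m : ℕ} (q : Fin (m+1) → α) (j : Fin m) :
    rankMap q j.castSucc =
      rankMap (fun i : Fin m => q i.castSucc) j +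
        if q (Fin.last m) ≤ q j.castSucc then 1 else 0 := by
  simp only [rankMap, Finset.card_filter, Fin.sum_univ_castSucc]

lemma rankMap_succ {α : Type*} [LinearOrder α] {m : ℕ} (q : Fin (m+1) → α) (j : Fin m) :
    rankMap q j.succ = rankMap (fun i : Fin m => q i.succ) j + if q 0 ≤ q j.succ then 1 else 0 := by
  simp only [rankMap, Finset.card_filter, Fin.sum_univ_succ]
  omega

namespace IsOPP

variable {m : ℕ} {w : Fin (m+1) → ℕ}

lemma apply_castSucc (hw : IsOPP w) (j : Fin m) :
    w j.castSucc = prefixorder w j + if w (Fin.last m) ≤ w j.castSucc then 1 else 0 := by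
  rw [prefixorder, ← rankMap_castSucc, rankMap_eq_self_of_isOPP hw]

lemma apply_succ (hw : IsOPP w) (j : Fin m) :
    w j.succ = suffixorder w j + if w 0 ≤ w j.succ then 1 else 0 := by
  rw [suffixorder, ← rankMap_succ, rankMap_eq_self_of_isOPP hw]

lemma apply_castSucc_ne_last (hw : IsOPP w) (j : Fin m) : w j.castSucc ≠ w (Fin.last m) :=
  hw.1.ne (Fin.castSucc_lt_last j).ne

end IsOPP

/-- The ℕ-valued analogue of `Fin.succAbove`. -/
def natSuccAbove (a v : ℕ) : ℕ :=
  if v < a then v else v + 1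

lemma natSuccAbove_strictMono (a : ℕ) : StrictMono (natSuccAbove a) := by
  intro u v huv
  unfold natSuccAbove
  split_ifs <;> omega

lemma Fin.eq_zero_or_eq_last_or_eq_succ_castSucc {m : ℕ} (j : Fin (m+2)) :
    j = 0 ∨ j = Fin.last (m+1) ∨ ∃ i : Fin m, j = i.succ.castSucc := by
  induction j using Fin.cases with
  | zero => exact Or.inl rfl
  | succ j =>
    induction j using Fin.lastCases with
    | last => exact Or.inr (Or.inl (Fin.succ_last m))
    | cast i => exact Or.inr (Or.inr ⟨i, Fin.succ_castSucc i⟩)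

lemma Fin.injective_of_ends_of_middle {α : Type*} {m : ℕ} {w : Fin (m+2) → α}
    (hends : w 0 ≠ w (Fin.last (m+1))) (hmid : Injective fun i : Fin m => w i.succ.castSucc)
    (hzero : ∀ i : Fin m, w i.succ.castSucc ≠ w 0)
    (hlast : ∀ i : Fin m, w i.succ.castSucc ≠ w (Fin.last (m+1))) : Injective w := by
  intro j k h
  rcases Fin.eq_zero_or_eq_last_or_eq_succ_castSucc j with rfl | rfl | ⟨i, rfl⟩ <;>
  rcases Fin.eq_zero_or_eq_last_or_eq_succ_castSucc k with rfl | rfl | ⟨i', rfl⟩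
  all_goals first
    | rfl
    | exact absurd h hends
    | exact absurd h.symm hends
    | exact absurd h (hzero _)
    | exact absurd h.symm (hzero _)
    | exact absurd h (hlast _)
    | exact absurd h.symm (hlast _)
    | rw [hmid h]

section Fusion

variable {m : ℕ} {o f : Fin (m+1) → ℕ} {w : Fin (m+2) → ℕ}

lemma apply_succ_eq_apply_castSucc_of_overlap (ho : IsOPP o) (hf : IsOPP f)
    (hof : suffixorder o = prefixorder f) (heq : o 0 = f (Fin.last m)) (j : Fin m) :
    o j.succ = f j.castSucc := by
  have ho' := ho.apply_succ j
  have hf' := hf.apply_castSucc j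
  have hne_o : o j.succ ≠ o 0 := ho.1.ne (Fin.succ_ne_zero j)
  have hne_f := hf.apply_castSucc_ne_last j
  rw [hof] at ho'
  split_ifs at ho' hf' <;> omega

lemma ends_of_fusion (hw : IsOPP w) (hpre : prefixorder w = o) (hsuf : suffixorder w = f)
    (heq : o 0 = f (Fin.last m)) :
    (w 0 = o 0 ∧ w (Fin.last (m+1)) = o 0 + 1) ∨ (w 0 = o 0 + 1 ∧ w (Fin.last (m+1)) = o 0) := by
  have h0 := hw.apply_castSucc 0
  have hl := hw.apply_succ (Fin.last m)
  simp only [Fin.castSucc_zero, Fin.succ_last, Nat.succ_eq_add_one, hpre, hsuf] at h0 hl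
  rcases (hw.1.ne (Fin.last_pos (n := m)).ne).lt_or_gt with hlt | hgt
  · simp only [hlt.le, hlt.not_ge, if_true, if_false] at h0 hl
    omega
  · simp only [hgt.le, hgt.not_ge, if_true, if_false] at h0 hl
    omega

lemma middle_of_fusion (hw : IsOPP w) (hsuf : suffixorder w = f)
    (hends : (w 0 = o 0 ∧ w (Fin.last (m+1)) = o 0 + 1) ∨
      (w 0 = o 0 + 1 ∧ w (Fin.last (m+1)) = o 0)) (i : Fin m) :
    w i.succ.castSucc = natSuccAbove (o 0) (f i.castSucc) := by
  have h := hw.apply_succ i.castSucc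
  rw [hsuf, Fin.succ_castSucc] at h
  have hne0 : w i.succ.castSucc ≠ w 0 := hw.1.ne (Fin.castSucc_ne_zero_iff.mpr (Fin.succ_ne_zero i))
  have hnel : w i.succ.castSucc ≠ w (Fin.last (m+1)) := hw.1.ne (Fin.castSucc_lt_last _).ne
  unfold natSuccAbove
  rcases hends with ⟨h0, hl⟩ | ⟨h0, hl⟩ <;> split_ifs at h ⊢ <;> omega

lemma isOPP_of_ends_of_middle (ho : IsOPP o) (hf : IsOPP f) (heq : o 0 = f (Fin.last m))
    (hends : (w 0 = o 0 ∧ w (Fin.last (m+1)) = o 0 + 1) ∨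
      (w 0 = o 0 + 1 ∧ w (Fin.last (m+1)) = o 0))
    (hmid : ∀ i : Fin m, w i.succ.castSucc = natSuccAbove (o 0) (f i.castSucc)) : IsOPP w := by
  have hmid_range : ∀ i : Fin m, w i.succ.castSucc < o 0 ∨ o 0 + 1 < w i.succ.castSucc := by
    intro i
    have hne : f i.castSucc ≠ o 0 := heq ▸ hf.apply_castSucc_ne_last i
    rw [hmid i, natSuccAbove]
    split_ifs <;> omega
  refine ⟨Fin.injective_of_ends_of_middle (by omega) ?_ (fun i => ?_) (fun i => ?_), fun j => ?_⟩
  · simp only [hmid]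
    exact (natSuccAbove_strictMono _).injective.comp (hf.1.comp (Fin.castSucc_injective _))
  · have := hmid_range i
    omega
  · have := hmid_range i
    omega
  · have := ho.2 0
    rcases Fin.eq_zero_or_eq_last_or_eq_succ_castSucc j with rfl | rfl | ⟨i, rfl⟩
    · omega
    · omega
    · have := hf.2 i.castSucc
      rw [hmid i, natSuccAbove]
      split_ifs <;> omega

lemma prefixorder_eq_of_ends_of_middle (ho : IsOPP o) (hf : IsOPP f)
    (hof : suffixorder o = prefixorder f) (heq : o 0 = f (Fin.last m)) (hw : IsOPP w)
    (hends : (w 0 = o 0 ∧ w (Fin.last (m+1)) = o 0 + 1) ∨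
      (w 0 = o 0 + 1 ∧ w (Fin.last (m+1)) = o 0))
    (hmid : ∀ i : Fin m, w i.succ.castSucc = natSuccAbove (o 0) (f i.castSucc)) :
    prefixorder w = o := by
  funext j
  induction j using Fin.cases with
  | zero =>
    have h := hw.apply_castSucc 0
    rw [Fin.castSucc_zero] at h
    split_ifs at h <;> omega
  | succ i =>
    have h := hw.apply_castSucc i.succ
    have hne : f i.castSucc ≠ o 0 := heq ▸ hf.apply_castSucc_ne_last i
    rw [apply_succ_eq_apply_castSucc_of_overlap ho hf hof heq]
    rw [hmid i, natSuccAbove] at h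
    split_ifs at h <;> omega

lemma suffixorder_eq_of_ends_of_middle (hf : IsOPP f) (heq : o 0 = f (Fin.last m)) (hw : IsOPP w)
    (hends : (w 0 = o 0 ∧ w (Fin.last (m+1)) = o 0 + 1) ∨
      (w 0 = o 0 + 1 ∧ w (Fin.last (m+1)) = o 0))
    (hmid : ∀ i : Fin m, w i.succ.castSucc = natSuccAbove (o 0) (f i.castSucc)) :
    suffixorder w = f := by
  funext j
  induction j using Fin.lastCases with
  | last =>
    have h := hw.apply_succ (Fin.last m)
    simp only [Fin.succ_last, Nat.succ_eq_add_one] at h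
    split_ifs at h <;> omega
  | cast i =>
    have h := hw.apply_succ i.castSucc
    have hne : f i.castSucc ≠ o 0 := heq ▸ hf.apply_castSucc_ne_last i
    rw [Fin.succ_castSucc, hmid i, natSuccAbove] at h
    split_ifs at h <;> omega

end Fusion

theorem stmt12 {m : ℕ} (o f : Fin (m+1) → ℕ) (ho : IsOPP o) (hf : IsOPP f)
    (hof : suffixorder o = prefixorder f) (heq : o 0 = f (Fin.last m)) :
    ∀ w : Fin (m+2) → ℕ,
      (IsOPP w ∧ prefixorder w = o ∧ suffixorder w = f) ↔
      ((w 0 = o 0 ∧ w (Fin.last (m+1)) = o 0 + 1 ∧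
          ∀ i : Fin m, w i.succ.castSucc =
            if f i.castSucc < o 0 then f i.castSucc else f i.castSucc + 1) ∨
       (w 0 = o 0 + 1 ∧ w (Fin.last (m+1)) = o 0 ∧
          ∀ i : Fin m, w i.succ.castSucc =
            if f i.castSucc < o 0 then f i.castSucc else f i.castSucc + 1)) := by
  intro w
  simp only [← and_assoc, ← or_and_right]
  constructor
  · rintro ⟨⟨hw, hpre⟩, hsuf⟩
    have hends := ends_of_fusion hw hpre hsuf heq
    exact ⟨hends, middle_of_fusion hw hsuf hends⟩
  · rintro ⟨hends, hmid⟩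
    have hw := isOPP_of_ends_of_middle ho hf heq hends hmid
    exact ⟨⟨hw, prefixorder_eq_of_ends_of_middle ho hf hof heq hw hends hmid⟩,
      suffixorder_eq_of_ends_of_middle hf heq hw hends hmid⟩
end

section
/- Correctness of the CSS occurrence computation in Case 2: for permutations o, f of {1,...,m} with suffixorder(o) = prefixorder(f) and o_1 ≠ f_m, and the unique superpattern u of length m+1 with prefixorder(u) = o and suffixorder(u) = f, an index j is an occurrence of u in k if and only if j is an occurrence of f and j-1 is an occurrence of o. Hence sup(u,k) = |Occ_o ∩ (Occ_f - 1)|. -/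
/-!
Among the entries of a window `w` of length `m + 2`, every comparison except the one between the
first and the last entry is read off its prefix order or its suffix order. For that last
comparison, the rank of `w 0` in the prefix and the rank of `w (m+1)` in the suffix each count
the middle entries below it, plus one; so the larger endpoint has the larger of these two ranks,
and, when the ranks differ (`o 0 ≠ f (Fin.last m)`), they decide the comparison. Hence the prefix
and suffix orders determine the order of `w`, i.e. the superpattern `u`, and the window of length
`m + 2` ending at `j` has order `u` iff its last `m + 1` entries (the window ending at `j`) have
order `f` and its first `m + 1` (the window ending at `j - 1`) have order `o`.
-/

section RankMap

variable {α β : Type*} [LinearOrder α] [LinearOrder β]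

theorem rankMap_le_rankMap_iff {m : ℕ} (q : Fin m → α) (i j : Fin m) :
    rankMap q i ≤ rankMap q j ↔ q i ≤ q j := by
  refine ⟨fun h => not_lt.mp fun hji => h.not_gt ?_, fun h => ?_⟩
  · refine Finset.card_lt_card ((Finset.ssubset_iff_of_subset ?_).mpr ⟨i, ?_⟩)
    · intro t ht
      simp only [Finset.mem_filter, Finset.mem_univ, true_and] at ht ⊢
      exact ht.trans hji.le
    · simp [hji]
  · refine Finset.card_le_card fun t ht => ?_
    simp only [Finset.mem_filter, Finset.mem_univ, true_and] at ht ⊢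
    exact ht.trans h

theorem rankMap_eq_rankMap_iff {m : ℕ} {q : Fin m → α} {r : Fin m → β} :
    rankMap q = rankMap r ↔ ∀ i j, (q i ≤ q j ↔ r i ≤ r j) := by
  refine ⟨fun h i j => ?_, fun h => funext fun j => ?_⟩
  · rw [← rankMap_le_rankMap_iff q, h, rankMap_le_rankMap_iff]
  · exact congrArg Finset.card (Finset.filter_congr fun i _ => h i j)

theorem prefixorder_rankMap {m : ℕ} (q : Fin (m+1) → α) :
    prefixorder (rankMap q) = prefixorder q :=
  rankMap_eq_rankMap_iff.mpr fun _ _ => rankMap_le_rankMap_iff q _ _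

theorem suffixorder_rankMap {m : ℕ} (q : Fin (m+1) → α) :
    suffixorder (rankMap q) = suffixorder q :=
  rankMap_eq_rankMap_iff.mpr fun _ _ => rankMap_le_rankMap_iff q _ _

theorem IsOPP.rankMap_eq {m : ℕ} {v : Fin m → ℕ} (hv : IsOPP v) : rankMap v = v := by
  obtain ⟨hinj, hbd⟩ := hv
  have himage : Finset.univ.image v = Finset.Icc 1 m := by
    refine Finset.eq_of_subset_of_card_le (fun a ha => ?_) (by
      rw [Finset.card_image_of_injective _ hinj]; simp)
    obtain ⟨i, -, rfl⟩ := Finset.mem_image.mp ha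
    exact Finset.mem_Icc.mpr (hbd i)
  funext j
  have hbelow : (Finset.univ.filter fun i => v i ≤ v j).image v = Finset.Icc 1 (v j) := by
    rw [← Finset.filter_image (p := (· ≤ v j)), himage]
    ext a
    simp only [Finset.mem_filter, Finset.mem_Icc]
    have := hbd j
    omega
  rw [rankMap, ← Finset.card_image_of_injective _ hinj, hbelow, Nat.card_Icc]
  omega

end RankMap

section Superpattern

variable {α β : Type*} [LinearOrder α] [LinearOrder β] {m : ℕ}

theorem suffixorder_last_le_prefixorder_zero {v : Fin (m+2) → α}
    (h : v (Fin.last (m+1)) ≤ v 0) : suffixorder v (Fin.last m) ≤ prefixorder v 0 := by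
  unfold suffixorder prefixorder rankMap
  -- the cyclic shift `i ↦ i + 1` sends suffix entries below `v (m+1)` into those below `v 0`
  refine Finset.card_le_card_of_injOn (fun i : Fin (m+1) => i + 1) (fun i hi => ?_)
    (add_left_injective 1).injOn
  simp only [Finset.mem_coe, Finset.mem_filter, Finset.mem_univ, true_and, Fin.succ_last]
    at hi ⊢
  rcases eq_or_ne i (Fin.last m) with rfl | hlast
  · rw [Fin.last_add_one]
  · have : (i + 1).castSucc = i.succ := Fin.ext (by
      simp [Fin.val_add_one_of_lt (Fin.lt_last_iff_ne_last.mpr hlast)])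
    rw [this]
    exact hi.trans h

theorem prefixorder_zero_le_suffixorder_last {v : Fin (m+2) → α}
    (h : v 0 ≤ v (Fin.last (m+1))) : prefixorder v 0 ≤ suffixorder v (Fin.last m) := by
  unfold suffixorder prefixorder rankMap
  refine Finset.card_le_card_of_injOn (fun i : Fin (m+1) => i - 1) (fun i hi => ?_)
    (sub_left_injective (b := 1)).injOn
  simp only [Finset.mem_coe, Finset.mem_filter, Finset.mem_univ, true_and, Fin.succ_last]
    at hi ⊢
  rcases eq_or_ne i 0 with rfl | hzero
  · rw [show (0 : Fin (m+1)) - 1 = Fin.last m from Fin.ext (by simp), Fin.succ_last]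
  · have : (i - 1).succ = i.castSucc := Fin.ext (by
      have : (i : ℕ) ≠ 0 := Fin.val_ne_iff.mpr hzero
      simp [Fin.coe_sub_one, hzero]
      omega)
    rw [this]
    exact hi.trans h

theorem zero_le_last_iff {v : Fin (m+2) → α}
    (hne : prefixorder v 0 ≠ suffixorder v (Fin.last m)) :
    v 0 ≤ v (Fin.last (m+1)) ↔ prefixorder v 0 < suffixorder v (Fin.last m) :=
  ⟨fun h => (prefixorder_zero_le_suffixorder_last h).lt_of_ne hne,
    fun h => not_lt.mp fun h' => (suffixorder_last_le_prefixorder_zero h'.le).not_gt h⟩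

theorem last_le_zero_iff {v : Fin (m+2) → α}
    (hne : prefixorder v 0 ≠ suffixorder v (Fin.last m)) :
    v (Fin.last (m+1)) ≤ v 0 ↔ suffixorder v (Fin.last m) < prefixorder v 0 :=
  ⟨fun h => (suffixorder_last_le_prefixorder_zero h).lt_of_ne hne.symm,
    fun h => not_lt.mp fun h' => (prefixorder_zero_le_suffixorder_last h'.le).not_gt h⟩

theorem le_iff_le_of_prefixorder_eq_of_suffixorder_eq {u : Fin (m+2) → α} {v : Fin (m+2) → β}
    (hpre : prefixorder u = prefixorder v) (hsuf : suffixorder u = suffixorder v)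
    (hne : prefixorder u 0 ≠ suffixorder u (Fin.last m)) (i j : Fin (m+2)) :
    u i ≤ u j ↔ v i ≤ v j := by
  have hne' : prefixorder v 0 ≠ suffixorder v (Fin.last m) := hpre ▸ hsuf ▸ hne
  have hcast (i j : Fin (m+1)) := rankMap_eq_rankMap_iff.mp hpre i j
  have hsucc (i j : Fin (m+1)) := rankMap_eq_rankMap_iff.mp hsuf i j
  rcases eq_or_ne i (Fin.last (m+1)) with rfl | hi
  · rcases eq_or_ne j 0 with rfl | hj
    · rw [last_le_zero_iff hne, last_le_zero_iff hne', hpre, hsuf]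
    · obtain ⟨j, rfl⟩ := Fin.exists_succ_eq.mpr hj
      rw [← Fin.succ_last]
      exact hsucc _ _
  rcases eq_or_ne j (Fin.last (m+1)) with rfl | hj
  · rcases eq_or_ne i 0 with rfl | hi0
    · rw [zero_le_last_iff hne, zero_le_last_iff hne', hpre, hsuf]
    · obtain ⟨i, rfl⟩ := Fin.exists_succ_eq.mpr hi0
      rw [← Fin.succ_last]
      exact hsucc _ _
  obtain ⟨i, rfl⟩ := Fin.exists_castSucc_eq.mpr hi
  obtain ⟨j, rfl⟩ := Fin.exists_castSucc_eq.mpr hj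
  exact hcast _ _

theorem rankMap_eq_iff_of_prefixorder_zero_ne_suffixorder_last {w : Fin (m+2) → α}
    {u : Fin (m+2) → ℕ} (hu : IsOPP u) (hne : prefixorder u 0 ≠ suffixorder u (Fin.last m)) :
    rankMap w = u ↔ prefixorder w = prefixorder u ∧ suffixorder w = suffixorder u := by
  refine ⟨?_, fun ⟨hwpre, hwsuf⟩ => ?_⟩
  · rintro rfl
    exact ⟨(prefixorder_rankMap w).symm, (suffixorder_rankMap w).symm⟩
  · rw [← hu.rankMap_eq]
    exact rankMap_eq_rankMap_iff.mpr
      (le_iff_le_of_prefixorder_eq_of_suffixorder_eq hwpre hwsuf (hwpre ▸ hwsuf ▸ hne))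

end Superpattern

section Occurrences

theorem prefixorder_window (k : ℕ → ℝ) (c ℓ : ℕ) :
    prefixorder (window k c (ℓ+1)) = rankMap (window k (c-1) ℓ) := by
  refine congrArg rankMap (funext fun i => congrArg k ?_)
  simp only [Fin.val_castSucc]
  omega

theorem suffixorder_window (k : ℕ → ℝ) {c ℓ : ℕ} (h : ℓ < c) :
    suffixorder (window k c (ℓ+1)) = rankMap (window k c ℓ) := by
  refine congrArg rankMap (funext fun i => congrArg k ?_)
  simp only [Fin.val_succ]
  omega

variable {k : ℕ → ℝ} {n : ℕ}

theorem mem_occSet {ℓ : ℕ} {p : Fin (ℓ+1) → ℕ} {c : ℕ} :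
    c ∈ occSet k n p ↔ isOcc k n p c := by
  simp only [occSet, Finset.mem_filter, Finset.mem_Icc]
  exact ⟨And.right, fun h => ⟨⟨by have := h.1; omega, h.2.1⟩, h⟩⟩

theorem isOcc_iff_of_prefixorder_zero_ne_suffixorder_last {u : Fin (m+2) → ℕ} (hu : IsOPP u)
    (hne : prefixorder u 0 ≠ suffixorder u (Fin.last m)) (j : ℕ) :
    isOcc k n u j ↔ isOcc k n (suffixorder u) j ∧ isOcc k n (prefixorder u) (j-1) := by
  have hw := rankMap_eq_iff_of_prefixorder_zero_ne_suffixorder_last (w := window k j (m+2)) hu hne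
  constructor
  · rintro ⟨hj, hjn, hwu⟩
    obtain ⟨hwpre, hwsuf⟩ := hw.mp hwu
    refine ⟨⟨by omega, hjn, ?_⟩, ⟨by omega, by omega, ?_⟩⟩
    · rw [← suffixorder_window k (by omega), hwsuf]
    · rw [← prefixorder_window, hwpre]
  · rintro ⟨⟨-, hjn, hwsuf⟩, ⟨hj, -, hwpre⟩⟩
    refine ⟨by omega, hjn, hw.mpr ⟨?_, ?_⟩⟩
    · rw [prefixorder_window, hwpre]
    · rw [suffixorder_window k (by omega), hwsuf]

theorem supp_eq_card_inter_image_pred {u : Fin (m+2) → ℕ} {o f : Fin (m+1) → ℕ}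
    (h : ∀ j, isOcc k n u j ↔ isOcc k n f j ∧ isOcc k n o (j-1)) :
    supp k n u = (occSet k n o ∩ (occSet k n f).image (· - 1)).card := by
  have himage : (occSet k n u).image (· - 1) = occSet k n o ∩ (occSet k n f).image (· - 1) := by
    ext c
    simp only [Finset.mem_image, Finset.mem_inter, mem_occSet, h]
    constructor
    · rintro ⟨j, ⟨hf, ho⟩, rfl⟩
      exact ⟨ho, j, hf, rfl⟩
    · rintro ⟨ho, j, hf, rfl⟩
      exact ⟨j, ⟨hf, ho⟩, rfl⟩
  rw [supp, ← himage, Finset.card_image_of_injOn]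
  intro a ha b hb hab
  have := (mem_occSet.mp ha).1
  have := (mem_occSet.mp hb).1
  simp only at hab
  omega

end Occurrences

theorem stmt15_general {m : ℕ} (k : ℕ → ℝ) (n : ℕ)
    (o f : Fin (m+1) → ℕ)
    (hne : o 0 ≠ f (Fin.last m))
    (u : Fin (m+2) → ℕ) (hu : IsOPP u ∧ prefixorder u = o ∧ suffixorder u = f) :
    (∀ j : ℕ, isOcc k n u j ↔ (isOcc k n f j ∧ isOcc k n o (j-1))) ∧
    supp k n u = ((occSet k n o) ∩ ((occSet k n f).image (· - 1))).card := by
  obtain ⟨huOPP, rfl, rfl⟩ := hu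
  have hocc := isOcc_iff_of_prefixorder_zero_ne_suffixorder_last (k := k) (n := n) huOPP hne
  exact ⟨hocc, supp_eq_card_inter_image_pred hocc⟩

theorem stmt15 {m : ℕ} (k : ℕ → ℝ) (n : ℕ) (hk : Set.InjOn k (Set.Icc 1 n))
    (o f : Fin (m+1) → ℕ) (ho : IsOPP o) (hf : IsOPP f)
    (hof : suffixorder o = prefixorder f) (hne : o 0 ≠ f (Fin.last m))
    (u : Fin (m+2) → ℕ) (hu : IsOPP u ∧ prefixorder u = o ∧ suffixorder u = f) :
    (∀ j : ℕ, isOcc k n u j ↔ (isOcc k n f j ∧ isOcc k n o (j-1))) ∧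
    supp k n u = ((occSet k n o) ∩ ((occSet k n f).image (· - 1))).card :=
  stmt15_general k n o f hne u hu
end

section
/- Every entry of a keypoint time series other than the first and last is a strict local extremum of the original series: if t is a sequence of reals with no two consecutive equal entries, and k = LEP(t) is the subsequence of keypoints, then consecutive entries of k strictly alternate between local minima and local maxima of t (the keypoint series is alternating: k_{i-1} < k_i > k_{i+1} or k_{i-1} > k_i < k_{i+1} for every interior i). -/
/-!
Between two consecutive keypoints there is no strict local extremum, so, as consecutive entries
are distinct, the series is strictly monotone there: a rise can only turn into a fall at a peak,
and a fall into a rise at a valley. An interior keypoint `b` with neighbours `a < b < c` in the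
keypoint list is a peak or a valley; at a peak the monotone run `[a, b]` ends with a rise and the
run `[b, c]` starts with a fall, so `t a < t b > t c`, and dually at a valley.
-/

/-- `t i` is a keypoint of the (1-indexed) time series `t` of length `N`. -/
def isKeypoint (t : ℕ → ℝ) (N i : ℕ) : Prop :=
  i = 1 ∨ i = N ∨ (t (i-1) > t i ∧ t i < t (i+1)) ∨ (t (i-1) < t i ∧ t i > t (i+1))

open Classical in
/-- The increasing list of keypoint indices of `t` (indices in `{1,...,N}`). -/
noncomputable def LEPidx (t : ℕ → ℝ) (N : ℕ) : List ℕ :=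
  Finset.sort ((Finset.Icc 1 N).filter fun i => isKeypoint t N i) (· ≤ ·)

/-- LEP on lists: the subsequence of keypoint values. -/
noncomputable def LEPlist (l : List ℝ) : List ℝ :=
  (LEPidx (fun i => l.getD (i-1) 0) l.length).map fun i => l.getD (i-1) 0

open OrderDual

section Runs

variable {α : Type*} [LinearOrder α]

/-- A valley of `f` is a peak of `toDual ∘ f`. -/
def IsPeak (f : ℕ → α) (i : ℕ) : Prop :=
  f (i - 1) < f i ∧ f (i + 1) < f i

theorem strictMonoOn_Icc_of_no_peak {f : ℕ → α} {a b : ℕ}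
    (hd : ∀ i, a ≤ i → i < b → f i ≠ f (i + 1)) (hpeak : ∀ i, a < i → i < b → ¬ IsPeak f i)
    (hstart : f a < f (a + 1)) : StrictMonoOn f (Set.Icc a b) := by
  have hstep : ∀ i, a ≤ i → i < b → f i < f (i + 1) := by
    intro i hai
    induction i, hai using Nat.le_induction with
    | base => exact fun _ => hstart
    | succ i hai ih =>
      intro hib
      have hup : f (i + 1 - 1) < f (i + 1) := by simpa using ih (by omega)
      exact lt_of_le_of_ne (not_lt.mp fun hdown => hpeak (i + 1) (by omega) hib ⟨hup, hdown⟩)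
        (hd _ (by omega) hib)
  exact strictMonoOn_of_lt_add_one Set.ordConnected_Icc
    fun i _ hi hi1 => hstep i hi.1 (by simp only [Set.mem_Icc] at hi1; omega)

theorem lt_of_isPeak_of_no_extremum {f : ℕ → α} {a b c : ℕ} (hab : a < b) (hbc : b < c)
    (hd : ∀ i, a ≤ i → i < c → f i ≠ f (i + 1)) (hb : IsPeak f b)
    (hno : ∀ i, a < i → i < c → i ≠ b → ¬ IsPeak f i ∧ ¬ IsPeak (toDual ∘ f) i) :
    f a < f b ∧ f c < f b := by
  constructor
  · rcases (hd a le_rfl (by omega)).lt_or_gt with hup | hdown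
    · exact strictMonoOn_Icc_of_no_peak (fun i h1 h2 => hd i h1 (by omega))
        (fun i h1 h2 => (hno i h1 (by omega) h2.ne).1) hup
        ⟨le_rfl, hab.le⟩ ⟨hab.le, le_rfl⟩ hab
    · have hfall : StrictMonoOn (toDual ∘ f) (Set.Icc a b) :=
        strictMonoOn_Icc_of_no_peak (fun i h1 h2 => hd i h1 (by omega))
          (fun i h1 h2 => (hno i h1 (by omega) h2.ne).2) hdown
      exact (lt_asymm hb.1 (hfall ⟨by omega, by omega⟩ ⟨hab.le, le_rfl⟩ (by omega))).elim
  · exact strictMonoOn_Icc_of_no_peak (f := toDual ∘ f) (fun i h1 h2 => hd i (by omega) h2)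
      (fun i h1 h2 => (hno i (by omega) h2 h1.ne').2) hb.2
      ⟨le_rfl, hbc.le⟩ ⟨hbc.le, le_rfl⟩ hbc

theorem alternating_of_isExtremum_of_no_extremum {f : ℕ → α} {a b c : ℕ} (hab : a < b)
    (hbc : b < c) (hd : ∀ i, a ≤ i → i < c → f i ≠ f (i + 1))
    (hb : IsPeak f b ∨ IsPeak (toDual ∘ f) b)
    (hno : ∀ i, a < i → i < c → i ≠ b → ¬ IsPeak f i ∧ ¬ IsPeak (toDual ∘ f) i) :
    (f a < f b ∧ f c < f b) ∨ (f b < f a ∧ f b < f c) := by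
  rcases hb with hpeak | hvalley
  · exact Or.inl (lt_of_isPeak_of_no_extremum hab hbc hd hpeak hno)
  · exact Or.inr (lt_of_isPeak_of_no_extremum (f := toDual ∘ f) hab hbc hd hvalley
      fun i h1 h2 h3 => (hno i h1 h2 h3).symm)

end Runs

theorem isKeypoint_iff (t : ℕ → ℝ) (N i : ℕ) :
    isKeypoint t N i ↔ i = 1 ∨ i = N ∨ IsPeak (toDual ∘ t) i ∨ IsPeak t i :=
  Iff.rfl

theorem mem_LEPidx {t : ℕ → ℝ} {N i : ℕ} :
    i ∈ LEPidx t N ↔ (1 ≤ i ∧ i ≤ N) ∧ isKeypoint t N i := by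
  simp [LEPidx]

theorem sortedLT_LEPidx (t : ℕ → ℝ) (N : ℕ) : (LEPidx t N).SortedLT :=
  Finset.sortedLT_sort _

theorem List.SortedLT.notMem_of_getElem_lt_of_lt_getElem {α : Type*} [LinearOrder α]
    {l : List α} (hl : l.SortedLT) {j : ℕ} {x : α} (hj : j + 1 < l.length) (h1 : l[j] < x) (h2 : x < l[j + 1]) :
    x ∉ l := by
  intro hx
  obtain ⟨m, hm, rfl⟩ := List.getElem_of_mem hx
  rw [hl.getElem_lt_getElem_iff] at h1 h2
  omega

theorem not_isKeypoint_of_between_LEPidx {t : ℕ → ℝ} {N j i : ℕ}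
    (hj : j + 1 < (LEPidx t N).length) (h1 : (LEPidx t N)[j]'(Nat.lt_of_succ_lt hj) < i)
    (h2 : i < (LEPidx t N)[j + 1]) : ¬ isKeypoint t N i := fun hi =>
  (sortedLT_LEPidx t N).notMem_of_getElem_lt_of_lt_getElem hj h1 h2 <| mem_LEPidx.mpr
    ⟨⟨(mem_LEPidx.mp (List.getElem_mem (Nat.lt_of_succ_lt hj))).1.1.trans h1.le,
      h2.le.trans (mem_LEPidx.mp (List.getElem_mem hj)).1.2⟩, hi⟩

theorem no_extremum_between_LEPidx {t : ℕ → ℝ} {N j : ℕ} (hj : j + 1 + 1 < (LEPidx t N).length)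
    (i : ℕ) (h1 : (LEPidx t N)[j] < i) (h2 : i < (LEPidx t N)[j + 1 + 1])
    (h3 : i ≠ (LEPidx t N)[j + 1]) : ¬ IsPeak t i ∧ ¬ IsPeak (toDual ∘ t) i := by
  have hi : ¬ isKeypoint t N i := by
    rcases h3.lt_or_gt with h3 | h3
    · exact not_isKeypoint_of_between_LEPidx (by omega) h1 h3
    · exact not_isKeypoint_of_between_LEPidx hj h3 h2
  simp only [isKeypoint_iff, not_or] at hi
  exact ⟨hi.2.2.2, hi.2.2.1⟩

theorem isExtremum_of_isKeypoint {t : ℕ → ℝ} {N i : ℕ} (hi : isKeypoint t N i) (h1 : i ≠ 1)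
    (hN : i ≠ N) : IsPeak t i ∨ IsPeak (toDual ∘ t) i := by
  rcases (isKeypoint_iff t N i).mp hi with h | h | h | h
  · exact absurd h h1
  · exact absurd h hN
  · exact Or.inr h
  · exact Or.inl h

theorem stmt16 (t : ℕ → ℝ) (N : ℕ)
    (hd : ∀ i, 1 ≤ i → i < N → t i ≠ t (i+1)) :
    ∀ j : ℕ, 1 ≤ j → ∀ h2 : j + 1 < (LEPidx t N).length,
      (t ((LEPidx t N)[j-1]'(by omega)) < t ((LEPidx t N)[j]'(by omega)) ∧
        t ((LEPidx t N)[j+1]'h2) < t ((LEPidx t N)[j]'(by omega))) ∨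
      (t ((LEPidx t N)[j]'(by omega)) < t ((LEPidx t N)[j-1]'(by omega)) ∧
        t ((LEPidx t N)[j]'(by omega)) < t ((LEPidx t N)[j+1]'h2)) := by
  intro j hj hlen
  obtain ⟨k, rfl⟩ : ∃ k, j = k + 1 := ⟨j - 1, by omega⟩
  simp only [Nat.add_sub_cancel]
  have hl := sortedLT_LEPidx t N
  have hab : (LEPidx t N)[k] < (LEPidx t N)[k + 1] := hl.getElem_lt_getElem_iff.mpr (by omega)
  have hbc : (LEPidx t N)[k + 1] < (LEPidx t N)[k + 1 + 1] :=
    hl.getElem_lt_getElem_iff.mpr (by omega)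
  have ha := mem_LEPidx.mp (List.getElem_mem (by omega : k < (LEPidx t N).length))
  have hb := mem_LEPidx.mp (List.getElem_mem (by omega : k + 1 < (LEPidx t N).length))
  have hc := mem_LEPidx.mp (List.getElem_mem hlen)
  have hno := no_extremum_between_LEPidx hlen
  exact alternating_of_isExtremum_of_no_extremum hab hbc
    (fun i hai hic => hd i (ha.1.1.trans hai) (by omega))
    (isExtremum_of_isKeypoint hb.2 (by omega) (by omega)) hno
end

section
/- For a time series t of length N ≥ 2 with pairwise distinct consecutive entries, where LEP(t) keeps the endpoints and the local minima and local maxima of t and removes an entry exactly when it lies strictly between its neighbors, extracting keypoints is idempotent: LEP(LEP(t)) = LEP(t). -/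
private lemma chain_lt (t : ℕ → ℝ) : ∀ k₁ k₀, k₀ < k₁ →
    (∀ i, k₀ ≤ i → i < k₁ → t i < t (i+1)) → t k₀ < t k₁ := by
  intro k₁
  induction k₁ with
  | zero => intro k₀ h; omega
  | succ n ih =>
    intro k₀ h hstep
    rcases Nat.lt_or_ge k₀ n with h' | h'
    · exact lt_trans (ih k₀ h' (fun i hi hi2 => hstep i hi (by omega)))
        (hstep n (by omega) (by omega))
    · have hk : k₀ = n := by omega
      subst hk
      exact hstep k₀ le_rfl (by omega)

private lemma chain_gt (t : ℕ → ℝ) (k₁ k₀ : ℕ) (h : k₀ < k₁)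
    (hstep : ∀ i, k₀ ≤ i → i < k₁ → t (i+1) < t i) : t k₁ < t k₀ := by
  have := chain_lt (fun i => -t i) k₁ k₀ h (fun i hi hi2 => by
    simpa using neg_lt_neg (hstep i hi hi2))
  simpa using this

private lemma run_inc (t : ℕ → ℝ) (N k₀ k₁ : ℕ) (h1 : 1 ≤ k₀) (h2 : k₁ ≤ N)
    (hnk : ∀ j, k₀ < j → j < k₁ → ¬ isKeypoint t N j)
    (hne : ∀ i, 1 ≤ i → i < N → t i ≠ t (i+1))
    (hbase : t k₀ < t (k₀+1)) :
    ∀ i, k₀ ≤ i → i < k₁ → t i < t (i+1) := by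
  have key : ∀ d, k₀ + d < k₁ → t (k₀+d) < t (k₀+d+1) := by
    intro d
    induction d with
    | zero => intro _; simpa using hbase
    | succ e ih =>
      intro hd
      have ih' : t (k₀+e) < t (k₀+e+1) := ih (by omega)
      have hne' : t (k₀+e+1) ≠ t (k₀+e+1+1) := hne _ (by omega) (by omega)
      have hnkp : ¬ isKeypoint t N (k₀+e+1) := hnk _ (by omega) (by omega)
      by_contra hle
      push_neg at hle
      have hlt : t (k₀+e+1+1) < t (k₀+e+1) := lt_of_le_of_ne hle (Ne.symm hne')
      apply hnkp
      refine Or.inr (Or.inr (Or.inr ⟨?_, hlt⟩))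
      have he : k₀+e+1-1 = k₀+e := by omega
      rw [he]; exact ih'
  intro i hi hi2
  have : i = k₀ + (i - k₀) := by omega
  rw [this]
  exact key _ (by omega)

private lemma run_dec (t : ℕ → ℝ) (N k₀ k₁ : ℕ) (h1 : 1 ≤ k₀) (h2 : k₁ ≤ N)
    (hnk : ∀ j, k₀ < j → j < k₁ → ¬ isKeypoint t N j)
    (hne : ∀ i, 1 ≤ i → i < N → t i ≠ t (i+1))
    (hbase : t (k₀+1) < t k₀) :
    ∀ i, k₀ ≤ i → i < k₁ → t (i+1) < t i := by
  have hnk' : ∀ j, k₀ < j → j < k₁ → ¬ isKeypoint (fun i => -t i) N j := by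
    intro j hj hj2 hkp
    apply hnk j hj hj2
    rcases hkp with h | h | ⟨ha, hb⟩ | ⟨ha, hb⟩
    · exact Or.inl h
    · exact Or.inr (Or.inl h)
    · exact Or.inr (Or.inr (Or.inr ⟨by simpa using ha, by simpa using hb⟩))
    · exact Or.inr (Or.inr (Or.inl ⟨by simpa using ha, by simpa using hb⟩))
  have := run_inc (fun i => -t i) N k₀ k₁ h1 h2 hnk'
    (fun i hi hi2 => by simpa using (hne i hi hi2)) (by simpa using neg_lt_neg hbase)
  intro i hi hi2
  simpa using neg_lt_neg (this i hi hi2)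

private lemma dirConst (t : ℕ → ℝ) (N k₀ k₁ : ℕ) (h1 : 1 ≤ k₀) (h2 : k₁ ≤ N) (h3 : k₀ < k₁)
    (hne : ∀ i, 1 ≤ i → i < N → t i ≠ t (i+1))
    (hnk : ∀ j, k₀ < j → j < k₁ → ¬ isKeypoint t N j) :
    (∀ i, k₀ ≤ i → i < k₁ → t i < t (i+1)) ∨ (∀ i, k₀ ≤ i → i < k₁ → t (i+1) < t i) := by
  rcases lt_or_gt_of_ne (hne k₀ h1 (by omega)) with hb | hb
  · exact Or.inl (run_inc t N k₀ k₁ h1 h2 hnk hne hb)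
  · exact Or.inr (run_dec t N k₀ k₁ h1 h2 hnk hne hb)

open Classical in
private lemma LEP_fixed (m : List ℝ) (hall : ∀ i, 1 ≤ i → i ≤ m.length →
    isKeypoint (fun i => m.getD (i-1) 0) m.length i) : LEPlist m = m := by
  unfold LEPlist LEPidx
  have hfilter : ((Finset.Icc 1 m.length).filter
      (fun i => isKeypoint (fun i => m.getD (i-1) 0) m.length i)) = Finset.Icc 1 m.length := by
    apply Finset.filter_true_of_mem
    intro i hi
    rw [Finset.mem_Icc] at hi
    exact hall i hi.1 hi.2
  rw [hfilter]
  have hsort : Finset.sort (Finset.Icc 1 m.length) (· ≤ ·) = List.range' 1 m.length := by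
    apply List.Perm.eq_of_pairwise' (Finset.pairwise_sort _ _)
      ((List.pairwise_lt_range' (s := 1) (n := m.length) (pos := Nat.one_pos)).imp le_of_lt)
    apply (List.perm_ext_iff_of_nodup (Finset.sort_nodup _ _) (List.nodup_range' (s := 1) (n := m.length) (step := 1) (h := Nat.one_pos))).2
    intro a
    rw [Finset.mem_sort, Finset.mem_Icc, List.mem_range'_1]
    omega
  rw [hsort]
  apply List.ext_getElem
  · simp
  · intro n h1 h2
    simp only [List.getElem_map, List.getElem_range'_1]
    rw [List.getD_eq_getElem m 0 (by simpa using h2)]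
    congr 1
    omega

theorem stmt17 (l : List ℝ) (hl : 2 ≤ l.length) (hd : l.Chain' (· ≠ ·)) :
    LEPlist (LEPlist l) = LEPlist l := by
  classical
  set t : ℕ → ℝ := fun i => l.getD (i-1) 0 with ht
  set N := l.length with hN
  set idx := LEPidx t N with hidx
  set M := idx.length with hM
  set g : ℕ → ℕ := fun a => idx.getD a 0 with hg
  have hml : LEPlist l = idx.map t := rfl
  have hMl : (LEPlist l).length = M := by rw [hml, List.length_map]
  have hgel : ∀ a (ha : a < M), g a = idx[a] := by
    intro a ha
    rw [hg]; exact List.getD_eq_getElem idx 0 ha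
  -- basic chain fact
  have hne : ∀ i, 1 ≤ i → i < N → t i ≠ t (i+1) := by
    intro i hi hi2
    have hc := List.isChain_iff_getElem.1 hd (i-1) (by omega)
    have e1 : t i = l[i-1]'(by omega) := by
      show l.getD (i-1) 0 = _
      exact List.getD_eq_getElem l 0 (by omega)
    have e2 : t (i+1) = l[i-1+1]'(by omega) := by
      show l.getD (i+1-1) 0 = _
      have e : i + 1 - 1 = i - 1 + 1 := by omega
      rw [e]
      exact List.getD_eq_getElem l 0 (by omega)
    rw [e1, e2]; exact hc
  -- membership in idx
  have hmem : ∀ k, k ∈ idx ↔ (1 ≤ k ∧ k ≤ N ∧ isKeypoint t N k) := by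
    intro k
    rw [hidx, LEPidx, Finset.mem_sort, Finset.mem_filter, Finset.mem_Icc]
    tauto
  have hsorted : List.Pairwise (· < ·) idx := (Finset.sortedLT_sort _).pairwise
  have hpw := List.pairwise_iff_getElem.1 hsorted
  -- strict monotonicity of g
  have hmono : ∀ a b, a < b → b < M → g a < g b := by
    intro a b hab hb
    rw [hgel a (by omega), hgel b hb]
    exact hpw a b (by omega) hb hab
  have hgetmem : ∀ a, a < M → 1 ≤ g a ∧ g a ≤ N ∧ isKeypoint t N (g a) := by
    intro a ha
    rw [hgel a ha]
    exact (hmem _).1 (idx.getElem_mem ha)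
  -- 1 and N in idx
  have h1mem : (1 : ℕ) ∈ idx := (hmem 1).2 ⟨le_rfl, by omega, Or.inl rfl⟩
  have hNmem : N ∈ idx := (hmem N).2 ⟨by omega, le_rfl, Or.inr (Or.inl rfl)⟩
  have h1pos : ∃ p, p < M ∧ g p = 1 := by
    rcases List.mem_iff_getElem.1 h1mem with ⟨p, hp, hpe⟩
    exact ⟨p, hp, by rw [hgel p hp]; exact hpe⟩
  have hNpos : ∃ p, p < M ∧ g p = N := by
    rcases List.mem_iff_getElem.1 hNmem with ⟨p, hp, hpe⟩
    exact ⟨p, hp, by rw [hgel p hp]; exact hpe⟩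
  have hMpos : 0 < M := by
    rcases h1pos with ⟨p, hp, _⟩; omega
  have hfirst : g 0 = 1 := by
    rcases h1pos with ⟨p, hp, hpe⟩
    rcases Nat.eq_or_lt_of_le (Nat.zero_le p) with h | h
    · rw [← h] at hpe; exact hpe
    · have h2 := hmono 0 p h hp
      have h3 := (hgetmem 0 hMpos).1
      omega
  have hlast : g (M-1) = N := by
    rcases hNpos with ⟨p, hp, hpe⟩
    rcases Nat.eq_or_lt_of_le (Nat.le_of_lt_succ (by omega : p < M - 1 + 1)) with h | h
    · rw [h] at hpe; exact hpe
    · have h2 := hmono p (M-1) h (by omega)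
      have h3 := (hgetmem (M-1) (by omega)).2.1
      omega
  -- no keypoints strictly between consecutive elements of idx
  have hgap : ∀ a, a + 1 < M → ∀ j, g a < j → j < g (a+1) → ¬ isKeypoint t N j := by
    intro a ha j hj1 hj2 hkp
    have hjmem : j ∈ idx := (hmem j).2 ⟨by have := (hgetmem a (by omega)).1; omega,
      by have := (hgetmem (a+1) ha).2.1; omega, hkp⟩
    rcases List.mem_iff_getElem.1 hjmem with ⟨p, hp, hpe⟩
    have hpg : g p = j := by rw [hgel p hp]; exact hpe
    rcases Nat.lt_trichotomy p (a+1) with h | h | h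
    · rcases Nat.lt_or_ge p a with h' | h'
      · have := hmono p a h' (by omega); omega
      · have hpa : p = a := by omega
        rw [hpa] at hpg; omega
    · rw [h] at hpg; omega
    · have := hmono (a+1) p h hp; omega
  -- the key alternation fact
  have halt : ∀ i, 1 ≤ i → i ≤ M →
      isKeypoint (fun i => (LEPlist l).getD (i-1) 0) (LEPlist l).length i := by
    intro i hi1 hiM
    rcases Nat.eq_or_lt_of_le hi1 with h1 | h1
    · exact Or.inl h1.symm
    rcases Nat.eq_or_lt_of_le hiM with hMcase | hMcase
    · rw [hMl]; exact Or.inr (Or.inl hMcase)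
    -- interior: 2 ≤ i ≤ M - 1
    have hval : ∀ a, a < M → (LEPlist l).getD a 0 = t (g a) := by
      intro a ha
      rw [hml, List.getD_eq_getElem _ 0 (by simpa using ha), List.getElem_map, hgel a ha]
    have hj1 : 1 ≤ i - 1 := by omega
    have hj2 : i - 1 + 1 < M := by omega
    have hjM : i - 1 < M := by omega
    have hjm1 : i - 1 - 1 < M := by omega
    -- k is an interior keypoint of t
    set k := g (i-1) with hk
    have hkbig : 1 < k := by
      have := hmono 0 (i-1) (by omega) hjM
      rw [hfirst] at this; omega
    have hksmall : k < N := by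
      rcases Nat.eq_or_lt_of_le (by omega : i - 1 ≤ M - 1) with h | h
      · exfalso; omega
      · have := hmono (i-1) (M-1) h (by omega)
        rw [hlast] at this; omega
    have hkkp := (hgetmem (i-1) hjM).2.2
    have hext : (t (k-1) > t k ∧ t k < t (k+1)) ∨ (t (k-1) < t k ∧ t k > t (k+1)) := by
      rcases hkkp with h | h | h | h
      · omega
      · omega
      · exact Or.inl h
      · exact Or.inr h
    -- translate goal values
    have e1 : (LEPlist l).getD (i-1-1) 0 = t (g (i-1-1)) := hval _ hjm1
    have e2 : (LEPlist l).getD (i-1) 0 = t k := hval _ hjM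
    have e3 : (LEPlist l).getD (i+1-1) 0 = t (g (i-1+1)) := by
      have e : i + 1 - 1 = i - 1 + 1 := by omega
      rw [e]; exact hval _ hj2
    -- left interval: between g (i-1-1) and k
    have hleftlt : g (i-1-1) < k := hmono (i-1-1) (i-1) (by omega) hjM
    have hleftgap : ∀ x, g (i-1-1) < x → x < k → ¬ isKeypoint t N x := by
      intro x hx1 hx2
      have hE : i - 1 - 1 + 1 = i - 1 := by omega
      have := hgap (i-1-1) (by omega) x hx1
      rw [hE] at this
      exact this hx2
    have hleftdir := dirConst t N (g (i-1-1)) k (hgetmem _ hjm1).1 (by omega) hleftlt hne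
      hleftgap
    -- right interval: between k and g (i-1+1)
    have hrightlt : k < g (i-1+1) := hmono (i-1) (i-1+1) (by omega) hj2
    have hrightgap : ∀ x, k < x → x < g (i-1+1) → ¬ isKeypoint t N x :=
      fun x hx1 hx2 => hgap (i-1) hj2 x hx1 hx2
    have hrightdir := dirConst t N k (g (i-1+1)) (by omega) (hgetmem _ hj2).2.1 hrightlt hne
      hrightgap
    -- step facts at the boundary
    have hkm1 : k - 1 + 1 = k := by omega
    rcases hext with ⟨ha, hb⟩ | ⟨ha, hb⟩
    · -- k is a local min: left interval decreasing, right increasing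
      have hLdec : ∀ x, g (i-1-1) ≤ x → x < k → t (x+1) < t x := by
        rcases hleftdir with hL | hL
        · exfalso
          have := hL (k-1) (by omega) (by omega)
          rw [hkm1] at this
          exact absurd this (not_lt.2 (le_of_lt ha))
        · exact hL
      have hRinc : ∀ x, k ≤ x → x < g (i-1+1) → t x < t (x+1) := by
        rcases hrightdir with hR | hR
        · exact hR
        · exfalso
          have := hR k le_rfl hrightlt
          exact absurd hb (not_lt.2 (le_of_lt this))
      have hL : t k < t (g (i-1-1)) := chain_gt t k _ hleftlt hLdec
      have hR : t k < t (g (i-1+1)) := chain_lt t _ k hrightlt hRinc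
      refine Or.inr (Or.inr (Or.inl ⟨?_, ?_⟩))
      · show (LEPlist l).getD (i-1-1) 0 > (LEPlist l).getD (i-1) 0
        rw [e1, e2]; exact hL
      · show (LEPlist l).getD (i-1) 0 < (LEPlist l).getD (i+1-1) 0
        rw [e2, e3]; exact hR
    · -- k is a local max: left increasing, right decreasing
      have hLinc : ∀ x, g (i-1-1) ≤ x → x < k → t x < t (x+1) := by
        rcases hleftdir with hL | hL
        · exact hL
        · exfalso
          have := hL (k-1) (by omega) (by omega)
          rw [hkm1] at this
          exact absurd this (not_lt.2 (le_of_lt ha))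
      have hRdec : ∀ x, k ≤ x → x < g (i-1+1) → t (x+1) < t x := by
        rcases hrightdir with hR | hR
        · exfalso
          have := hR k le_rfl hrightlt
          exact absurd hb (not_lt.2 (le_of_lt this))
        · exact hR
      have hL : t (g (i-1-1)) < t k := chain_lt t k _ hleftlt hLinc
      have hR : t (g (i-1+1)) < t k := chain_gt t _ k hrightlt hRdec
      refine Or.inr (Or.inr (Or.inr ⟨?_, ?_⟩))
      · show (LEPlist l).getD (i-1-1) 0 < (LEPlist l).getD (i-1) 0
        rw [e1, e2]; exact hL
      · show (LEPlist l).getD (i-1) 0 > (LEPlist l).getD (i+1-1) 0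
        rw [e2, e3]; exact hR
  apply LEP_fixed
  intro i h1 h2
  exact halt i h1 (by omega)
end
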